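/- Let C be a triangulated category, F_• an exact functor from C to towers in C, and W an object. Suppose X → Y → Z is a distinguished triangle (so F_{n}X → F_{n}Y → F_{n}Z is a distinguished triangle for each n). If every map W → F_{s+r+r'}(Z) becomes null in F_{s+r}(Z), and every map W → F_{s+r}(X) becomes null in F_s(X), then every map W → F_{s+r+r'}(Y) becomes null in F_s(Y). -/

import Mathlib

open CategoryTheory CategoryTheory.Limits CategoryTheory.Pretriangulated

/-- The composite `F (s+r) ⟶ F s` of `r` tower maps in a tower of endofunctors. -/
def towerComp {C : Type*} [Category C] (F : ℤ → C ⥤ C) (t : ∀ n : ℤ, F (n + 1) ⟶ F n)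
    (s : ℤ) : (r : ℕ) → (F (s + r) ⟶ F s)
  | 0 => eqToHom (congrArg F (by simp))
  | (r + 1) => eqToHom (congrArg F (by push_cast; ring)) ≫ t (s + r) ≫ towerComp F t s r

/-- Triangle case of Lemma 2.1: given a distinguished triangle `X → Y → Z`, if maps from `W`
into `F_{s+r+r'} Z` become null in `F_{s+r} Z` and maps from `W` into `F_{s+r} X` become null
in `F_s X`, then maps from `W` into `F_{s+r+r'} Y` become null in `F_s Y`. -/
theorem tower_null_of_triangle {C : Type*} [Category C] [Preadditive C] [HasZeroObject C]
    [HasShift C ℤ] [∀ n : ℤ, (shiftFunctor C n).Additive] [Pretriangulated C]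
    (F : ℤ → C ⥤ C) (t : ∀ n : ℤ, F (n + 1) ⟶ F n)
    -- each F_n is exact: it sends distinguished triangles to distinguished triangles
    (hF : ∀ (n : ℤ) (T : Triangle C), (T ∈ distTriang C) →
      ∃ h' : (F n).obj T.obj₃ ⟶ ((F n).obj T.obj₁)⟦(1 : ℤ)⟧,
        Triangle.mk ((F n).map T.mor₁) ((F n).map T.mor₂) h' ∈ distTriang C)
    (X Y Z : C) (f : X ⟶ Y) (g : Y ⟶ Z) (h : Z ⟶ X⟦(1 : ℤ)⟧)
    (hT : Triangle.mk f g h ∈ distTriang C)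
    (W : C) (r r' : ℕ) (s : ℤ)
    (hZ : ∀ ζ : W ⟶ (F (s + r + r')).obj Z, ζ ≫ (towerComp F t (s + r) r').app Z = 0)
    (hX : ∀ ζ : W ⟶ (F (s + r)).obj X, ζ ≫ (towerComp F t s r).app X = 0) :
    ∀ ζ : W ⟶ (F (s + r + r')).obj Y,
      ζ ≫ (towerComp F t (s + r) r' ≫ towerComp F t s r).app Y = 0 := by
  intro ζ
  obtain ⟨h', hT'⟩ := hF (s + r) _ hT
  -- the map ζ pushed down to F (s+r) Y kills g
  have hkill : (ζ ≫ (towerComp F t (s + r) r').app Y) ≫ (F (s + r)).map g = 0 := by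
    have := (towerComp F t (s + r) r').naturality g
    rw [Category.assoc, ← this, ← Category.assoc, hZ (ζ ≫ (F (s + r + r')).map g)]
  obtain ⟨α, hα⟩ := Triangle.coyoneda_exact₂ _ hT' (ζ ≫ (towerComp F t (s + r) r').app Y) hkill
  have hnat := (towerComp F t s r).naturality f
  obtain ⟨α, hα⟩ : ∃ α : W ⟶ (F (s + r)).obj X,
      ζ ≫ (towerComp F t (s + r) r').app Y = α ≫ (F (s + r)).map f := ⟨α, hα⟩
  rw [NatTrans.comp_app, ← Category.assoc, hα, Category.assoc]
  rw [hnat, ← Category.assoc, hX α, zero_comp]
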